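/- Let α, β > 1 be real numbers and let f : [0,1] → [0,1] be the base-change-transformation, defined by f(0) = 0 and f(⟨d_i⟩_α) = ⟨d_i⟩_β. Then f is strictly increasing on [0,1]. -/

import Mathlib

/-!
Two facts combine. First, for every base `γ > 1` the map `d ↦ ⟨d⟩_γ` is strictly decreasing
for the lexicographic order on sequences of positive digits: the first digit `d₀` confines
`⟨d⟩_γ` to `(γ ^ (-d₀), γ ^ (1 - d₀)]`, and `γ ^ d₀ ⟨d⟩_γ = 1 + (γ - 1) ⟨d₁ d₂ ⋯⟩_γ` passes
to the tail. Second, the greedy algorithm (choose `d₀` as above, rescale the remainder to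
`(0, 1]` and repeat) expands every `x ∈ (0, 1]`, because each step contracts the error by
`(α - 1) / α`. So `x < y` forces the greedy `α`-digits of `y` to be lexicographically smaller
than those of `x`, and the `β`-values are then in the same order as `x` and `y`.
-/

/-- The α-expansion value ⟨d_i⟩_α = ∑_{i=1}^∞ (α-1)^{i-1} α^{-(d_1+⋯+d_i)},
with the digit sequence `d : ℕ → ℕ` indexed from 0 (so `d 0` is the first digit). -/
noncomputable def alphaExpansion (α : ℝ) (d : ℕ → ℕ) : ℝ :=
  ∑' i : ℕ, (α - 1) ^ i * α ^ (-((∑ j ∈ Finset.range (i + 1), d j : ℕ) : ℤ))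

open Set Filter

section Expansion

variable {γ : ℝ} {d : ℕ → ℕ}

lemma alphaExpansion_term_le (hγ : 1 < γ) (hd : ∀ i, 1 ≤ d i) (i : ℕ) :
    (γ - 1) ^ i * γ ^ (-((∑ j ∈ Finset.range (i + 1), d j : ℕ) : ℤ)) ≤
      ((γ - 1) / γ) ^ i * γ⁻¹ := by
  have hsum : i + 1 ≤ ∑ j ∈ Finset.range (i + 1), d j := by
    simpa using Finset.card_nsmul_le_sum (Finset.range (i + 1)) d 1 fun j _ => hd j
  calc (γ - 1) ^ i * γ ^ (-((∑ j ∈ Finset.range (i + 1), d j : ℕ) : ℤ))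
      ≤ (γ - 1) ^ i * γ ^ (-((i + 1 : ℕ) : ℤ)) := by
        gcongr
        exact hγ.le
    _ = ((γ - 1) / γ) ^ i * γ⁻¹ := by
        rw [zpow_neg, zpow_natCast, pow_succ, div_pow, mul_inv]; ring

lemma summable_alphaExpansion_term (hγ : 1 < γ) (hd : ∀ i, 1 ≤ d i) :
    Summable fun i : ℕ => (γ - 1) ^ i * γ ^ (-((∑ j ∈ Finset.range (i + 1), d j : ℕ) : ℤ)) := by
  have hr : (γ - 1) / γ < 1 := (div_lt_one (by linarith)).2 (by linarith)
  exact Summable.of_nonneg_of_le (fun i => by positivity) (alphaExpansion_term_le hγ hd)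
    ((summable_geometric_of_lt_one (by positivity) hr).mul_right γ⁻¹)

lemma alphaExpansion_pos (hγ : 1 < γ) (hd : ∀ i, 1 ≤ d i) : 0 < alphaExpansion γ d :=
  (summable_alphaExpansion_term hγ hd).tsum_pos (fun i => by positivity) 0 (by positivity)

lemma alphaExpansion_le_one (hγ : 1 < γ) (hd : ∀ i, 1 ≤ d i) : alphaExpansion γ d ≤ 1 := by
  have hr : (γ - 1) / γ < 1 := (div_lt_one (by linarith)).2 (by linarith)
  have hr0 : 0 ≤ (γ - 1) / γ := by positivity
  calc alphaExpansion γ d ≤ ∑' i : ℕ, ((γ - 1) / γ) ^ i * γ⁻¹ :=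
        (summable_alphaExpansion_term hγ hd).tsum_le_tsum (alphaExpansion_term_le hγ hd)
          ((summable_geometric_of_lt_one hr0 hr).mul_right γ⁻¹)
    _ = 1 := by
        rw [tsum_mul_right, tsum_geometric_of_lt_one hr0 hr]
        field_simp
        ring

lemma pow_mul_alphaExpansion (hγ : 1 < γ) (hd : ∀ i, 1 ≤ d i) :
    γ ^ d 0 * alphaExpansion γ d = 1 + (γ - 1) * alphaExpansion γ (fun i => d (i + 1)) := by
  have hγ0 : γ ≠ 0 := by positivity
  rw [alphaExpansion, (summable_alphaExpansion_term hγ hd).tsum_eq_zero_add, mul_add,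
    alphaExpansion, ← tsum_mul_left, ← tsum_mul_left]
  congr 1
  · simp [zpow_neg, hγ0]
  · refine tsum_congr fun i => ?_
    rw [Finset.sum_range_succ' _ (i + 1), pow_succ]
    push_cast
    rw [neg_add, zpow_add₀ hγ0, zpow_neg γ (d 0 : ℤ), zpow_natCast]
    field_simp

lemma one_lt_pow_mul_alphaExpansion (hγ : 1 < γ) (hd : ∀ i, 1 ≤ d i) :
    1 < γ ^ d 0 * alphaExpansion γ d := by
  rw [pow_mul_alphaExpansion hγ hd]
  have := alphaExpansion_pos hγ fun i => hd (i + 1)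
  nlinarith

lemma pow_mul_alphaExpansion_le (hγ : 1 < γ) (hd : ∀ i, 1 ≤ d i) :
    γ ^ d 0 * alphaExpansion γ d ≤ γ := by
  rw [pow_mul_alphaExpansion hγ hd]
  nlinarith [alphaExpansion_le_one hγ fun i => hd (i + 1)]

end Expansion

lemma alphaExpansion_lt_of_agree_of_lt {γ : ℝ} (hγ : 1 < γ) (n : ℕ) :
    ∀ {d e : ℕ → ℕ}, (∀ i, 1 ≤ d i) → (∀ i, 1 ≤ e i) → (∀ j < n, d j = e j) → d n < e n →
      alphaExpansion γ e < alphaExpansion γ d := by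
  induction n with
  | zero =>
    intro d e hd he _ hlt
    refine lt_of_mul_lt_mul_left ?_ (pow_nonneg (zero_le_one.trans hγ.le) (d 0))
    have hshift : γ ^ (d 0 + 1) * alphaExpansion γ e ≤ γ :=
      (mul_le_mul_of_nonneg_right (pow_le_pow_right₀ hγ.le hlt)
        (alphaExpansion_pos hγ he).le).trans (pow_mul_alphaExpansion_le hγ he)
    rw [pow_succ, mul_right_comm] at hshift
    calc γ ^ d 0 * alphaExpansion γ e ≤ 1 :=
          le_of_mul_le_mul_right (by rwa [one_mul]) (by linarith)
      _ < γ ^ d 0 * alphaExpansion γ d := one_lt_pow_mul_alphaExpansion hγ hd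
  | succ n ih =>
    intro d e hd he hagree hlt
    have htail := ih (fun i => hd (i + 1)) (fun i => he (i + 1))
      (fun j hj => hagree (j + 1) (by omega)) hlt
    refine lt_of_mul_lt_mul_left ?_ (pow_nonneg (zero_le_one.trans hγ.le) (d 0))
    rw [pow_mul_alphaExpansion hγ hd, hagree 0 n.succ_pos, pow_mul_alphaExpansion hγ he]
    gcongr

lemma alphaExpansion_strictAntiOn_lex {γ : ℝ} (hγ : 1 < γ) :
    StrictAntiOn (fun d : Lex (ℕ → ℕ) => alphaExpansion γ (ofLex d))
      {d | ∀ i, 1 ≤ ofLex d i} := by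
  rintro d hd e he ⟨n, hagree, hlt⟩
  exact alphaExpansion_lt_of_agree_of_lt hγ n hd he hagree hlt

lemma eqOn_zero_of_abs_le_mul_abs_comp {X : Type*} {s : Set X} {T : X → X} {E : X → ℝ}
    {C r : ℝ} (hT : MapsTo T s s) (hr0 : 0 ≤ r) (hr1 : r < 1) (hC : ∀ x ∈ s, |E x| ≤ C)
    (hE : ∀ x ∈ s, |E x| ≤ r * |E (T x)|) : EqOn E 0 s := by
  have hpow : ∀ n : ℕ, ∀ x ∈ s, |E x| ≤ r ^ n * C := by
    intro n
    induction n with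
    | zero => simpa using hC
    | succ n ih =>
      intro x hx
      calc |E x| ≤ r * |E (T x)| := hE x hx
        _ ≤ r * (r ^ n * C) := by gcongr; exact ih _ (hT hx)
        _ = r ^ (n + 1) * C := by ring
  intro x hx
  have hlim : Tendsto (fun n : ℕ => r ^ n * C) atTop (nhds 0) := by
    simpa using (tendsto_pow_atTop_nhds_zero_of_lt_one hr0 hr1).mul_const C
  exact abs_nonpos_iff.1 (ge_of_tendsto' hlim fun n => hpow n x hx)

/-- The unique `k` with `α ^ (-k) < x ≤ α ^ (1 - k)` when `x ∈ (0, 1]`. -/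
noncomputable def greedyDigit (α x : ℝ) : ℕ := ⌊-Real.logb α x⌋₊ + 1

noncomputable def greedyRemainder (α x : ℝ) : ℝ := (x * α ^ greedyDigit α x - 1) / (α - 1)

noncomputable def greedyDigits (α x : ℝ) (i : ℕ) : ℕ := greedyDigit α ((greedyRemainder α)^[i] x)

section Greedy

variable {α x : ℝ}

lemma mul_pow_greedyDigit_mem_Ioc (hα : 1 < α) (hx : x ∈ Ioc 0 1) :
    x * α ^ greedyDigit α x ∈ Ioc 1 α := by
  set t := -Real.logb α x
  have ht : 0 ≤ t := neg_nonneg.2 (Real.logb_nonpos hα hx.1.le hx.2)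
  have hk : (greedyDigit α x : ℝ) = ⌊t⌋₊ + 1 := by simp [greedyDigit, t]
  have hxk : x * α ^ greedyDigit α x = α ^ ((greedyDigit α x : ℝ) - t) := by
    rw [Real.rpow_sub (by linarith), Real.rpow_natCast, Real.rpow_neg (by linarith),
      Real.rpow_logb (by linarith) hα.ne' hx.1]
    field_simp
  rw [hxk]
  constructor
  · exact Real.one_lt_rpow hα (by linarith [Nat.lt_floor_add_one t])
  · conv_rhs => rw [← Real.rpow_one α]
    exact Real.rpow_le_rpow_of_exponent_le hα.le (by linarith [Nat.floor_le ht])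

lemma mapsTo_greedyRemainder (hα : 1 < α) : MapsTo (greedyRemainder α) (Ioc 0 1) (Ioc 0 1) := by
  intro x hx
  obtain ⟨hlo, hhi⟩ := mul_pow_greedyDigit_mem_Ioc hα hx
  exact ⟨div_pos (by linarith) (by linarith), (div_le_one (by linarith)).2 (by linarith)⟩

lemma mul_pow_greedyDigit (hα : 1 < α) (x : ℝ) :
    x * α ^ greedyDigit α x = 1 + (α - 1) * greedyRemainder α x := by
  have : α - 1 ≠ 0 := by linarith
  rw [greedyRemainder]
  field_simp
  ring

lemma greedyDigits_zero (α x : ℝ) : greedyDigits α x 0 = greedyDigit α x := rfl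

lemma greedyDigits_succ (α x : ℝ) :
    (fun i => greedyDigits α x (i + 1)) = greedyDigits α (greedyRemainder α x) := by
  funext i
  simp only [greedyDigits, Function.iterate_succ_apply]

lemma one_le_greedyDigits (α x : ℝ) (i : ℕ) : 1 ≤ greedyDigits α x i := Nat.le_add_left 1 _

lemma pow_greedyDigit_mul_sub (hα : 1 < α) (x : ℝ) :
    α ^ greedyDigit α x * (alphaExpansion α (greedyDigits α x) - x) = (α - 1) *
      (alphaExpansion α (greedyDigits α (greedyRemainder α x)) - greedyRemainder α x) := by
  have h := pow_mul_alphaExpansion hα (one_le_greedyDigits α x)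
  rw [greedyDigits_zero, greedyDigits_succ] at h
  linear_combination h - mul_pow_greedyDigit hα x

lemma abs_alphaExpansion_greedyDigits_sub_le (hα : 1 < α) (x : ℝ) :
    |alphaExpansion α (greedyDigits α x) - x| ≤ (α - 1) / α *
      |alphaExpansion α (greedyDigits α (greedyRemainder α x)) - greedyRemainder α x| := by
  have hα0 : 0 < α := by linarith
  have hk : α ≤ α ^ greedyDigit α x := le_self_pow₀ hα.le (Nat.succ_ne_zero _)
  have h := congrArg abs (pow_greedyDigit_mul_sub hα x)
  rw [abs_mul, abs_mul, abs_of_pos (by positivity), abs_of_pos (sub_pos.2 hα)] at h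
  rw [div_mul_eq_mul_div, le_div_iff₀ hα0, ← h, mul_comm]
  gcongr

lemma alphaExpansion_greedyDigits (hα : 1 < α) (hx : x ∈ Ioc 0 1) :
    alphaExpansion α (greedyDigits α x) = x := by
  have hα0 : 0 < α := by linarith
  refine sub_eq_zero.1 <| eqOn_zero_of_abs_le_mul_abs_comp (mapsTo_greedyRemainder hα)
    (E := fun y => alphaExpansion α (greedyDigits α y) - y) (C := 1) (r := (α - 1) / α)
    (by positivity) ((div_lt_one hα0).2 (by linarith)) ?_
    (fun y _ => abs_alphaExpansion_greedyDigits_sub_le hα y) hx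
  intro y hy
  have h0 := alphaExpansion_pos hα (one_le_greedyDigits α y)
  have h1 := alphaExpansion_le_one hα (one_le_greedyDigits α y)
  rw [abs_le]
  constructor <;> linarith [hy.1, hy.2]

end Greedy

theorem base_change_strictMonoOn (α β : ℝ) (hα : 1 < α) (hβ : 1 < β)
    (f : ℝ → ℝ) (hf0 : f 0 = 0)
    (hf : ∀ d : ℕ → ℕ, (∀ i, 1 ≤ d i) →
      f (alphaExpansion α d) = alphaExpansion β d) :
    StrictMonoOn f (Set.Icc (0 : ℝ) 1) := by
  have hfx : ∀ x ∈ Ioc (0 : ℝ) 1, f x = alphaExpansion β (greedyDigits α x) := fun x hx => by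
    rw [← hf _ (one_le_greedyDigits α x), alphaExpansion_greedyDigits hα hx]
  intro x hx y hy hxy
  have hy' : y ∈ Ioc (0 : ℝ) 1 := ⟨hx.1.trans_lt hxy, hy.2⟩
  rcases hx.1.eq_or_lt with rfl | hx0
  · rw [hf0, hfx y hy']
    exact alphaExpansion_pos hβ (one_le_greedyDigits α y)
  have hx' : x ∈ Ioc (0 : ℝ) 1 := ⟨hx0, hx.2⟩
  have hlex : toLex (greedyDigits α y) < toLex (greedyDigits α x) := by
    refine ((alphaExpansion_strictAntiOn_lex hα).lt_iff_gt (one_le_greedyDigits α x)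
      (one_le_greedyDigits α y)).1 ?_
    change alphaExpansion α (greedyDigits α x) < alphaExpansion α (greedyDigits α y)
    rwa [alphaExpansion_greedyDigits hα hx', alphaExpansion_greedyDigits hα hy']
  rw [hfx x hx', hfx y hy']
  exact alphaExpansion_strictAntiOn_lex hβ (one_le_greedyDigits α y) (one_le_greedyDigits α x)
    hlex
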